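/- arXiv:2511.13538 — 2 statements merged into one kernel-verified Lean document; each statement's English description precedes it below -/
import Mathlib

section
/- Invertibility of the linearized operator in the direction 5Q⁴: there exists a unique even function R ∈ 𝒴 such that LR = 5Q⁴ pointwise on ℝ (i.e. −R'' + R − 5Q⁴R = 5Q⁴); moreover this R satisfies ∫_ℝ Q R = −(3/4) ∫_ℝ Q. -/
open MeasureTheory Real Set Filter

/-- The ground state of the quintic gKdV equation: `Q x = (3 sech²(2x))^(1/4)`. -/
noncomputable def Q (x : ℝ) : ℝ := (3 * (Real.cosh (2*x))⁻¹ ^ 2) ^ (1/4 : ℝ)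

/-- The space `𝒴` of smooth functions with exponential decay of all derivatives:
`|φ^{(k)}(y)| ≤ C_k (1+|y|)^{r_k} e^{−|y|}`. -/
def MemY (φ : ℝ → ℝ) : Prop :=
  ContDiff ℝ (⊤ : ℕ∞) φ ∧
  ∀ k : ℕ, ∃ C > (0:ℝ), ∃ r > (0:ℝ),
    ∀ y : ℝ, |iteratedDeriv k φ y| ≤ C * (1 + |y|) ^ r * Real.exp (-|y|)

/-!
Write `Q = 3^{1/4} w` with `w = sech(2x)^{1/2}` and `T = tanh(2x)`; then `w' = -T w`,
`T' = 2 w⁴` and `T² + w⁴ = 1`, so all computations are polynomial identities in `w`, `T` and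
`F = ∫₀ˣ w³`. The solution is `R = -(3/2)(w⁴ + T w F)`: every derivative of it is a polynomial
in `w, T, F` whose monomials all carry a factor `w = O(e^{-|x|})`. The identity for `(Q, R)`
holds because `QR + (3/4)Q` has the explicit antiderivative `(3/4) 3^{1/4} (w² F - T w)`, which
is integrable. For uniqueness, the difference `d` of two even solutions solves `d'' = (1 - 5Q⁴) d`
with `d'(0) = 0`; the even solution `Y = w⁻¹ - 2w³` of the same equation grows like `e^{|x|}`,
Cauchy uniqueness makes `d` proportional to `Y` on `[0, ∞)`, and decay forces `d = 0`.
-/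

open Asymptotics Topology
open scoped ContDiff

noncomputable section

def expNegAbs (x : ℝ) : ℝ := exp (-|x|)

lemma expNegAbs_pos (x : ℝ) : 0 < expNegAbs x := exp_pos _

lemma expNegAbs_le_one (x : ℝ) : expNegAbs x ≤ 1 :=
  exp_le_one_iff.mpr (neg_nonpos.mpr (abs_nonneg x))

lemma isBigO_expNegAbs_pow {m : ℕ} (hm : m ≠ 0) : (expNegAbs ^ m) =O[⊤] expNegAbs :=
  isBigO_of_le _ fun x => by
    simp only [Pi.pow_apply, norm_pow, norm_of_nonneg (expNegAbs_pos x).le]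
    exact pow_le_of_le_one (expNegAbs_pos x).le (expNegAbs_le_one x) hm

lemma isBigO_expNegAbs_one : expNegAbs =O[⊤] (1 : ℝ → ℝ) :=
  isBigO_of_le _ fun x => by
    simpa [abs_of_pos (expNegAbs_pos x)] using expNegAbs_le_one x

lemma integrable_expNegAbs : Integrable expNegAbs := by
  have hIoi : IntegrableOn expNegAbs (Ioi 0) :=
    (exp_neg_integrableOn_Ioi 0 one_pos).congr_fun
      (fun x (hx : 0 < x) => by simp [expNegAbs, abs_of_pos hx]) measurableSet_Ioi
  have hIic : IntegrableOn expNegAbs (Iic 0) :=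
    (integrableOn_exp_Iic 0).congr_fun
      (fun x (hx : x ≤ 0) => by simp [expNegAbs, abs_of_nonpos hx]) measurableSet_Iic
  rw [← integrableOn_univ, ← Iic_union_Ioi (a := (0 : ℝ))]
  exact hIic.union hIoi

lemma integrable_of_isBigO_expNegAbs {f : ℝ → ℝ} (hf : Continuous f)
    (h : f =O[⊤] expNegAbs) : Integrable f :=
  h.integrable hf.aestronglyMeasurable integrable_expNegAbs

lemma abs_intervalIntegral_le_integral_abs {f : ℝ → ℝ} (hf : Integrable f) (a b : ℝ) :
    |∫ t in a..b, f t| ≤ ∫ t, |f t| :=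
  intervalIntegral.norm_integral_le_integral_norm_uIoc.trans
    (setIntegral_le_integral hf.norm (.of_forall fun _ => norm_nonneg _))

def IteratedDerivIsBigO (n : ℕ) (f ρ : ℝ → ℝ) : Prop :=
  ∀ k ≤ n, iteratedDeriv k f =O[⊤] ρ

namespace IteratedDerivIsBigO

variable {n : ℕ} {f g ρ σ : ℝ → ℝ}

lemma zero (h : f =O[⊤] ρ) : IteratedDerivIsBigO 0 f ρ
  | 0, _ => by simpa using h

lemma succ (h₀ : f =O[⊤] ρ) (h : IteratedDerivIsBigO n (deriv f) ρ) :
    IteratedDerivIsBigO (n + 1) f ρ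
  | 0, _ => by simpa using h₀
  | k + 1, hk => by
    rw [iteratedDeriv_succ']
    exact h k (Nat.le_of_succ_le_succ hk)

lemma trans_isBigO (h : IteratedDerivIsBigO n f ρ) (hρ : ρ =O[⊤] σ) :
    IteratedDerivIsBigO n f σ :=
  fun k hk => (h k hk).trans hρ

lemma const_mul (h : IteratedDerivIsBigO n f ρ) (c : ℝ) :
    IteratedDerivIsBigO n (fun x => c * f x) ρ := by
  intro k hk
  have : iteratedDeriv k (fun x => c * f x) = fun x => c * iteratedDeriv k f x :=
    funext fun x => iteratedDeriv_const_mul_field c f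
  rw [this]
  exact (h k hk).const_mul_left c

lemma add (hfρ : IteratedDerivIsBigO n f ρ) (hgρ : IteratedDerivIsBigO n g ρ)
    (hf : ContDiff ℝ ∞ f) (hg : ContDiff ℝ ∞ g) : IteratedDerivIsBigO n (f + g) ρ := by
  intro k hk
  have : iteratedDeriv k (f + g) = iteratedDeriv k f + iteratedDeriv k g := funext fun _ =>
    iteratedDeriv_add (hf.contDiffAt.of_le ENat.LEInfty.out) (hg.contDiffAt.of_le ENat.LEInfty.out)
  rw [this]
  exact (hfρ k hk).add (hgρ k hk)

lemma mul (hfρ : IteratedDerivIsBigO n f ρ) (hgσ : IteratedDerivIsBigO n g σ)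
    (hf : ContDiff ℝ ∞ f) (hg : ContDiff ℝ ∞ g) : IteratedDerivIsBigO n (f * g) (ρ * σ) := by
  intro k hk
  have : iteratedDeriv k (f * g) = fun x => ∑ i ∈ Finset.range (k + 1),
      k.choose i * iteratedDeriv i f x * iteratedDeriv (k - i) g x := funext fun _ =>
    iteratedDeriv_mul (hf.contDiffAt.of_le ENat.LEInfty.out) (hg.contDiffAt.of_le ENat.LEInfty.out)
  rw [this]
  refine IsBigO.fun_sum fun i hi => ?_
  have hik : i ≤ k := Nat.lt_succ_iff.mp (Finset.mem_range.mp hi)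
  simp_rw [mul_assoc]
  exact ((hfρ i (hik.trans hk)).mul (hgσ (k - i) ((k.sub_le i).trans hk))).const_mul_left _

lemma pow (h : IteratedDerivIsBigO n f ρ) (hf : ContDiff ℝ ∞ f) :
    ∀ m : ℕ, IteratedDerivIsBigO n (f ^ m) (ρ ^ m)
  | 0 => fun k _ => by
    rcases k with _ | k
    · simp [isBigO_refl]
    · have : iteratedDeriv (k + 1) (1 : ℝ → ℝ) = 0 :=
        funext fun x => by simp [Pi.one_def, iteratedDeriv_const]
      rw [pow_zero, this]
      exact isBigO_zero _ _
  | m + 1 => by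
    rw [pow_succ, pow_succ]
    exact (pow h hf m).mul h (hf.pow m) hf

end IteratedDerivIsBigO

lemma hasDerivAt_deriv_of_contDiff {f : ℝ → ℝ} (hf : ContDiff ℝ 2 f) (x : ℝ) :
    HasDerivAt (deriv f) (iteratedDeriv 2 f x) x := by
  rw [iteratedDeriv_succ, iteratedDeriv_one]
  exact ((hf.iterate_deriv' 1 1).differentiable (by norm_num) x).hasDerivAt

lemma HasDerivAt.eq_zero_of_even {d : ℝ → ℝ} {d₀ : ℝ} (heven : Function.Even d)
    (hd : HasDerivAt d d₀ 0) : d₀ = 0 := by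
  have hcomp := (neg_zero (G := ℝ) ▸ hd).scomp (0 : ℝ) (hasDerivAt_neg' 0)
  rw [show d ∘ (fun x => -x) = d from funext heven] at hcomp
  have := hd.unique hcomp
  simp only [smul_eq_mul] at this
  linarith

theorem eq_zero_of_hasDerivAt_of_hasDerivAt_mul {V h h' : ℝ → ℝ} {K : ℝ}
    (hV : ∀ x, |V x| ≤ K) (hh : ∀ x, HasDerivAt h (h' x) x)
    (hh' : ∀ x, HasDerivAt h' (V x * h x) x) (h₀ : h 0 = 0) (h'₀ : h' 0 = 0) {x : ℝ}
    (hx : 0 ≤ x) : h x = 0 := by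
  have hK : 0 ≤ K := (abs_nonneg _).trans (hV 0)
  have hu : ∀ t, HasDerivAt (fun t => (h t, h' t)) (h' t, V t * h t) t :=
    fun t => (hh t).prodMk (hh' t)
  have bound : ∀ t, ‖(h' t, V t * h t)‖ ≤ (1 + K) * ‖(h t, h' t)‖ := fun t => by
    simp only [Prod.norm_def, Real.norm_eq_abs, abs_mul]
    have h1 := le_max_left |h t| |h' t|
    have h2 := le_max_right |h t| |h' t|
    have h3 := mul_le_mul (hV t) h1 (abs_nonneg _) hK
    refine max_le ?_ ?_ <;> nlinarith [abs_nonneg (h t)]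
  have := eq_zero_of_abs_deriv_le_mul_abs_self_of_eq_zero_right
    (continuous_iff_continuousAt.2 fun t => (hu t).continuousAt).continuousOn
    (fun t _ => (hu t).hasDerivWithinAt) (by simp [h₀, h'₀]) (fun t _ => bound t)
    x ⟨hx, le_rfl⟩
  exact congrArg Prod.fst this

theorem eq_zero_of_even_of_tendsto {V d d' Y Y' : ℝ → ℝ} {K : ℝ} (hV : ∀ x, |V x| ≤ K)
    (hd : ∀ x, HasDerivAt d (d' x) x) (hd' : ∀ x, HasDerivAt d' (V x * d x) x)
    (hY : ∀ x, HasDerivAt Y (Y' x) x) (hY' : ∀ x, HasDerivAt Y' (V x * Y x) x)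
    (heven : Function.Even d) (hY₀ : Y 0 ≠ 0) (hY'₀ : Y' 0 = 0)
    (hd_lim : Tendsto d atTop (𝓝 0)) (hY_lim : Tendsto Y atTop atTop) : d = 0 := by
  -- `Y 0 • d - d 0 • Y` solves the same equation with zero Cauchy data at `0`.
  have hprop : ∀ x, 0 ≤ x → Y 0 * d x - d 0 * Y x = 0 := fun x hx =>
    eq_zero_of_hasDerivAt_of_hasDerivAt_mul hV
      (fun x => ((hd x).const_mul (Y 0)).fun_sub ((hY x).const_mul (d 0)))
      (fun x => (((hd' x).const_mul (Y 0)).fun_sub ((hY' x).const_mul (d 0))).congr_deriv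
        (by ring))
      (by ring) (by rw [(hd 0).eq_zero_of_even heven, hY'₀]; ring) hx
  have hd₀ : d 0 = 0 := by
    by_contra hne
    have hlim : Tendsto (fun x => Y 0 * d x / d 0) atTop (𝓝 0) := by
      simpa using (hd_lim.const_mul (Y 0)).div_const (d 0)
    refine not_tendsto_nhds_of_tendsto_atTop hY_lim 0 (hlim.congr' ?_)
    filter_upwards [eventually_ge_atTop 0] with x hx
    field_simp
    linarith [hprop x hx]
  have hpos : ∀ x, 0 ≤ x → d x = 0 := fun x hx => by
    simpa [hd₀, hY₀] using hprop x hx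
  funext x
  rcases le_total 0 x with hx | hx
  · exact hpos x hx
  · rw [← heven x]; exact hpos (-x) (neg_nonneg.mpr hx)

lemma MemY.tendsto_atTop {f : ℝ → ℝ} (hf : MemY f) : Tendsto f atTop (𝓝 0) := by
  obtain ⟨C, -, r, -, hb⟩ := hf.2 0
  have hlim : Tendsto (fun y : ℝ => C * exp 1 * ((1 + y) ^ r * exp (-1 * (1 + y)))) atTop
      (𝓝 0) := by
    simpa using ((tendsto_rpow_mul_exp_neg_mul_atTop_nhds_zero r 1 one_pos).comp
      (tendsto_atTop_add_const_left atTop 1 tendsto_id)).const_mul (C * exp 1)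
  refine squeeze_zero_norm' ?_ hlim
  filter_upwards [eventually_ge_atTop 0] with y hy
  have := hb y
  rw [iteratedDeriv_zero, abs_of_nonneg hy] at this
  rw [Real.norm_eq_abs]
  convert this using 1
  rw [show exp (-y) = exp 1 * exp (-1 * (1 + y)) by rw [← exp_add]; ring_nf]
  ring

lemma memY_of_iteratedDerivIsBigO {f : ℝ → ℝ} (hf : ContDiff ℝ ∞ f)
    (h : ∀ n, IteratedDerivIsBigO n f expNegAbs) : MemY f := by
  refine ⟨hf, fun k => ?_⟩
  obtain ⟨C, hC⟩ := isBigO_top.mp (h k k le_rfl)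
  refine ⟨max C 1, by positivity, 1, one_pos, fun y => ?_⟩
  have hy := hC y
  simp only [Real.norm_eq_abs, expNegAbs, abs_exp] at hy
  rw [rpow_one]
  calc |iteratedDeriv k f y| ≤ C * exp (-|y|) := hy
    _ ≤ max C 1 * (1 + |y|) * exp (-|y|) := by
      gcongr
      nlinarith [le_max_left C 1, le_max_right C 1, abs_nonneg y]

namespace GKdV

def w (x : ℝ) : ℝ := (√(cosh (2 * x)))⁻¹

def T (x : ℝ) : ℝ := tanh (2 * x)

def F (x : ℝ) : ℝ := ∫ u in (0 : ℝ)..x, w u ^ 3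

def R (x : ℝ) : ℝ := -(3 / 2) * (w x ^ 4 + T x * w x * F x)

lemma w_pos (x : ℝ) : 0 < w x := inv_pos.mpr (sqrt_pos.mpr (cosh_pos _))

lemma w_sq (x : ℝ) : w x ^ 2 = (cosh (2 * x))⁻¹ := by
  rw [w, inv_pow, sq_sqrt (cosh_pos _).le]

lemma T_sq_add_w_pow_four (x : ℝ) : T x ^ 2 + w x ^ 4 = 1 := by
  have h := cosh_sq_sub_sinh_sq (2 * x)
  have hc := (cosh_pos (2 * x)).ne'
  rw [T, tanh_eq_sinh_div_cosh, show w x ^ 4 = (w x ^ 2) ^ 2 by ring, w_sq]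
  field_simp
  linarith

lemma w_le_one (x : ℝ) : w x ≤ 1 :=
  inv_le_one_of_one_le₀ (one_le_sqrt.mpr (one_le_cosh _))

lemma w_le_two_mul_expNegAbs (x : ℝ) : w x ≤ 2 * expNegAbs x := by
  have hexp : exp (2 * |x|) = exp |x| ^ 2 := by rw [← exp_nat_mul]; norm_num
  have hcosh : exp |x| ^ 2 / 2 ≤ cosh (2 * x) := by
    rw [← cosh_abs, abs_mul, abs_two, cosh_eq, hexp]
    linarith [exp_pos (-(2 * |x|))]
  have hsq : w x ^ 2 ≤ (2 * expNegAbs x) ^ 2 :=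
    calc w x ^ 2 ≤ (exp |x| ^ 2 / 2)⁻¹ := by rw [w_sq]; exact inv_anti₀ (by positivity) hcosh
      _ = 2 * expNegAbs x ^ 2 := by rw [expNegAbs, exp_neg]; field_simp
      _ ≤ (2 * expNegAbs x) ^ 2 := by nlinarith [expNegAbs_pos x]
  exact (pow_le_pow_iff_left₀ (w_pos x).le (by linarith [expNegAbs_pos x]) two_ne_zero).mp hsq

lemma abs_T_le_one (x : ℝ) : |T x| ≤ 1 := (abs_tanh_lt_one _).le

lemma T_eq_sinh_div_cosh : T = fun x => sinh (2 * x) / cosh (2 * x) :=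
  funext fun x => tanh_eq_sinh_div_cosh (2 * x)

lemma hasDerivAt_w (x : ℝ) : HasDerivAt w (-(T x * w x)) x := by
  have hc := (hasDerivAt_const_mul (x := x) (2 : ℝ)).cosh
  have hs0 := (sqrt_pos.mpr (cosh_pos (2 * x))).ne'
  refine ((hc.sqrt (cosh_pos _).ne').inv hs0).congr_deriv ?_
  rw [T, w, tanh_eq_sinh_div_cosh]
  field_simp
  rw [sq_sqrt (cosh_pos _).le]

lemma hasDerivAt_T (x : ℝ) : HasDerivAt T (2 * w x ^ 4) x := by
  have h2 := hasDerivAt_const_mul (x := x) (2 : ℝ)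
  rw [T_eq_sinh_div_cosh]
  refine (h2.sinh.div h2.cosh (cosh_pos _).ne').congr_deriv ?_
  have hc := (cosh_pos (2 * x)).ne'
  rw [show w x ^ 4 = (w x ^ 2) ^ 2 by ring, w_sq]
  field_simp
  linear_combination cosh_sq_sub_sinh_sq (2 * x)

lemma continuous_w : Continuous w :=
  (continuous_sqrt.comp (continuous_cosh.comp (continuous_const_mul 2))).inv₀
    fun _ => (sqrt_pos.mpr (cosh_pos _)).ne'

lemma hasDerivAt_F (x : ℝ) : HasDerivAt F (w x ^ 3) x :=
  intervalIntegral.integral_hasDerivAt_right ((continuous_w.pow 3).intervalIntegrable _ _)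
    ((continuous_w.pow 3).stronglyMeasurableAtFilter _ _) (continuous_w.pow 3).continuousAt

lemma contDiff_w : ContDiff ℝ ∞ w :=
  ((contDiff_cosh.comp (contDiff_const.mul contDiff_id)).sqrt fun _ => (cosh_pos _).ne').inv
    fun _ => (sqrt_pos.mpr (cosh_pos _)).ne'

lemma contDiff_T : ContDiff ℝ ∞ T := by
  rw [T_eq_sinh_div_cosh]
  have h2 : ContDiff ℝ ∞ fun x : ℝ => 2 * x := contDiff_const.mul contDiff_id
  exact (contDiff_sinh.comp h2).div (contDiff_cosh.comp h2) fun _ => (cosh_pos _).ne'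

lemma contDiff_F : ContDiff ℝ ∞ F :=
  contDiff_infty_iff_deriv.mpr ⟨fun x => (hasDerivAt_F x).differentiableAt,
    by simpa only [funext fun x => (hasDerivAt_F x).deriv] using contDiff_w.pow 3⟩

lemma contDiff_R : ContDiff ℝ ∞ R :=
  contDiff_const.mul ((contDiff_w.pow 4).add ((contDiff_T.mul contDiff_w).mul contDiff_F))

lemma w_neg (x : ℝ) : w (-x) = w x := by simp [w]

lemma T_neg (x : ℝ) : T (-x) = -T x := by simp [T]

lemma F_neg (x : ℝ) : F (-x) = -F x := by
  have := intervalIntegral.integral_comp_neg (a := 0) (b := x) fun u => w u ^ 3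
  simp only [w_neg, neg_zero] at this
  rw [F, F, this, intervalIntegral.integral_symm]

lemma R_neg (x : ℝ) : R (-x) = R x := by
  simp only [R, w_neg, T_neg, F_neg]; ring

lemma isBigO_w : w =O[⊤] expNegAbs :=
  IsBigO.of_bound 2 <| .of_forall fun x => by
    rw [norm_of_nonneg (w_pos x).le, norm_of_nonneg (expNegAbs_pos x).le]
    exact w_le_two_mul_expNegAbs x

lemma isBigO_T : T =O[⊤] (1 : ℝ → ℝ) :=
  isBigO_of_le _ fun x => by simpa using abs_T_le_one x

lemma integrable_w_pow_three : Integrable fun x => w x ^ 3 :=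
  integrable_of_isBigO_expNegAbs (continuous_w.pow 3)
    ((isBigO_w.pow 3).trans (isBigO_expNegAbs_pow three_ne_zero))

lemma isBigO_F : F =O[⊤] (1 : ℝ → ℝ) :=
  IsBigO.of_bound (∫ u, |w u ^ 3|) <| .of_forall fun x => by
    simpa [F] using abs_intervalIntegral_le_integral_abs integrable_w_pow_three 0 x

lemma iteratedDerivIsBigO_w_T (n : ℕ) :
    IteratedDerivIsBigO n w expNegAbs ∧ IteratedDerivIsBigO n T 1 := by
  induction n with
  | zero => exact ⟨.zero isBigO_w, .zero isBigO_T⟩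
  | succ n ih =>
    obtain ⟨hw, hT⟩ := ih
    have hdw : deriv w = fun x => -1 * (T * w) x :=
      funext fun x => by simp [(hasDerivAt_w x).deriv]
    have hdT : deriv T = fun x => 2 * (w ^ 4) x :=
      funext fun x => by simp [(hasDerivAt_T x).deriv]
    refine ⟨.succ isBigO_w ?_, .succ isBigO_T ?_⟩
    · rw [hdw]
      simpa only [one_mul] using (hT.mul hw contDiff_T contDiff_w).const_mul (-1)
    · rw [hdT]
      exact ((hw.pow contDiff_w 4).const_mul 2).trans_isBigO
        ((isBigO_expNegAbs_pow four_ne_zero).trans isBigO_expNegAbs_one)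

lemma iteratedDerivIsBigO_F : ∀ n, IteratedDerivIsBigO n F 1
  | 0 => .zero isBigO_F
  | n + 1 => by
    refine .succ isBigO_F ?_
    rw [funext fun x => (hasDerivAt_F x).deriv]
    exact (((iteratedDerivIsBigO_w_T n).1.pow contDiff_w 3).trans_isBigO
        ((isBigO_expNegAbs_pow three_ne_zero).trans isBigO_expNegAbs_one))

lemma iteratedDerivIsBigO_R (n : ℕ) : IteratedDerivIsBigO n R expNegAbs := by
  obtain ⟨hw, hT⟩ := iteratedDerivIsBigO_w_T n
  have hTw : ContDiff ℝ ∞ (T * w) := contDiff_T.mul contDiff_w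
  have hTwF : ContDiff ℝ ∞ (T * w * F) := hTw.mul contDiff_F
  have hw4 : IteratedDerivIsBigO n (w ^ 4) expNegAbs :=
    (hw.pow contDiff_w 4).trans_isBigO (isBigO_expNegAbs_pow four_ne_zero)
  have hTwF' : IteratedDerivIsBigO n (T * w * F) expNegAbs := by
    simpa only [one_mul, mul_one] using
      (hT.mul hw contDiff_T contDiff_w).mul (iteratedDerivIsBigO_F n) hTw contDiff_F
  exact (hw4.add hTwF' (contDiff_w.pow 4) hTwF).const_mul (-(3 / 2))

lemma memY_R : MemY R := memY_of_iteratedDerivIsBigO contDiff_R iteratedDerivIsBigO_R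

lemma Q_eq (x : ℝ) : Q x = 3 ^ (1 / 4 : ℝ) * w x := by
  rw [Q, ← w_sq, ← pow_mul, mul_rpow (by norm_num) (pow_nonneg (w_pos x).le _)]
  congr 1
  rw [show (1 / 4 : ℝ) = ((4 : ℕ) : ℝ)⁻¹ by norm_num]
  exact pow_rpow_inv_natCast (w_pos x).le four_ne_zero

lemma Q_pow_four (x : ℝ) : Q x ^ 4 = 3 * w x ^ 4 := by
  rw [Q_eq, mul_pow, show (1 / 4 : ℝ) = ((4 : ℕ) : ℝ)⁻¹ by norm_num,
    rpow_inv_natCast_pow (by norm_num) four_ne_zero]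

lemma hasDerivAt_R (x : ℝ) :
    HasDerivAt R (9 / 2 * T x * w x ^ 4 - 3 * w x ^ 5 * F x + 3 / 2 * T x ^ 2 * w x * F x) x := by
  have hw := hasDerivAt_w x
  have hT := hasDerivAt_T x
  have hF := hasDerivAt_F x
  refine (((hw.fun_pow 4).fun_add ((hT.fun_mul hw).fun_mul hF)).const_mul
    (-(3 / 2))).congr_deriv ?_
  push_cast
  ring

lemma iteratedDeriv_two_R (x : ℝ) : iteratedDeriv 2 R x =
    6 * w x ^ 8 - 33 / 2 * T x ^ 2 * w x ^ 4 + 21 * T x * w x ^ 5 * F x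
      - 3 / 2 * T x ^ 3 * w x * F x := by
  have hw := hasDerivAt_w x
  have hT := hasDerivAt_T x
  have hF := hasDerivAt_F x
  have h := (((hT.const_mul (9 / 2)).fun_mul (hw.fun_pow 4)).fun_sub
    (((hw.fun_pow 5).const_mul 3).fun_mul hF)).fun_add
    ((((hT.fun_pow 2).const_mul (3 / 2)).fun_mul hw).fun_mul hF)
  rw [iteratedDeriv_succ, iteratedDeriv_one, funext fun x => (hasDerivAt_R x).deriv]
  refine (h.congr_deriv ?_).deriv
  push_cast
  ring

lemma R_solves (x : ℝ) : -iteratedDeriv 2 R x + R x - 5 * Q x ^ 4 * R x = 5 * Q x ^ 4 := by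
  rw [iteratedDeriv_two_R, Q_pow_four, R]
  linear_combination (33 / 2 * w x ^ 4 + 3 / 2 * T x * w x * F x) * T_sq_add_w_pow_four x

lemma continuous_Q : Continuous Q := by
  rw [funext Q_eq]
  exact continuous_const.mul continuous_w

lemma isBigO_Q : Q =O[⊤] expNegAbs := by
  rw [funext Q_eq]
  exact isBigO_w.const_mul_left _

lemma hasDerivAt_antideriv_Q_mul_R (x : ℝ) :
    HasDerivAt (fun x => 3 / 4 * 3 ^ (1 / 4 : ℝ) * (w x ^ 2 * F x - T x * w x))
      (Q x * R x + 3 / 4 * Q x) x := by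
  have hw := hasDerivAt_w x
  refine ((((hw.fun_pow 2).fun_mul (hasDerivAt_F x)).fun_sub
    ((hasDerivAt_T x).fun_mul hw)).const_mul _).congr_deriv ?_
  rw [Q_eq, R]
  push_cast
  linear_combination (3 / 4 * 3 ^ (1 / 4 : ℝ) * w x) * T_sq_add_w_pow_four x

lemma integral_Q_mul_R : ∫ y, Q y * R y = -(3 / 4) * ∫ y, Q y := by
  have hR : R =O[⊤] (1 : ℝ → ℝ) := by
    simpa using (iteratedDerivIsBigO_R 0 0 le_rfl).trans isBigO_expNegAbs_one
  have hQ := integrable_of_isBigO_expNegAbs continuous_Q isBigO_Q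
  have hQR : Integrable fun y => Q y * R y :=
    integrable_of_isBigO_expNegAbs (continuous_Q.mul contDiff_R.continuous)
      (by simpa using isBigO_Q.mul hR)
  have hΦ : Integrable fun x => 3 / 4 * 3 ^ (1 / 4 : ℝ) * (w x ^ 2 * F x - T x * w x) := by
    refine integrable_of_isBigO_expNegAbs (continuous_const.mul (((continuous_w.pow 2).mul
      contDiff_F.continuous).sub (contDiff_T.continuous.mul continuous_w))) ?_
    have hw2 : (fun x => w x ^ 2) =O[⊤] expNegAbs :=
      (isBigO_w.pow 2).trans (isBigO_expNegAbs_pow two_ne_zero)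
    refine IsBigO.const_mul_left (IsBigO.sub ?_ ?_) _
    · simpa using hw2.mul isBigO_F
    · simpa using isBigO_T.mul isBigO_w
  have := integral_eq_zero_of_hasDerivAt_of_integrable hasDerivAt_antideriv_Q_mul_R
    (hQR.add (hQ.const_mul _)) hΦ
  rw [integral_add hQR (hQ.const_mul _), integral_const_mul] at this
  linarith

def Y (x : ℝ) : ℝ := (w x)⁻¹ - 2 * w x ^ 3

lemma hasDerivAt_Y (x : ℝ) : HasDerivAt Y (T x * (w x)⁻¹ + 6 * T x * w x ^ 3) x := by
  have hw := hasDerivAt_w x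
  refine ((hw.fun_inv (w_pos x).ne').fun_sub ((hw.fun_pow 3).const_mul 2)).congr_deriv ?_
  field_simp [(w_pos x).ne']
  push_cast
  ring

lemma hasDerivAt_deriv_Y (x : ℝ) : HasDerivAt (fun x => T x * (w x)⁻¹ + 6 * T x * w x ^ 3)
    ((1 - 5 * Q x ^ 4) * Y x) x := by
  have hw := hasDerivAt_w x
  have hT := hasDerivAt_T x
  refine ((hT.fun_mul (hw.fun_inv (w_pos x).ne')).fun_add
    ((hT.const_mul 6).fun_mul (hw.fun_pow 3))).congr_deriv ?_
  have hwinv : w x * (w x)⁻¹ = 1 := mul_inv_cancel₀ (w_pos x).ne'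
  rw [Q_pow_four, Y]
  push_cast
  linear_combination ((w x)⁻¹ - 18 * w x ^ 3) * T_sq_add_w_pow_four x
    + (16 * w x ^ 3 + T x ^ 2 * (w x)⁻¹) * hwinv

lemma tendsto_Y_atTop : Tendsto Y atTop atTop := by
  refine tendsto_atTop_mono' _ ?_
    (tendsto_atTop_add_const_right _ (-2) (tendsto_exp_atTop.atTop_div_const two_pos))
  filter_upwards [eventually_ge_atTop 0] with x hx
  have hinv : exp x / 2 ≤ (w x)⁻¹ := by
    have := inv_anti₀ (w_pos x) (w_le_two_mul_expNegAbs x)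
    rwa [expNegAbs, abs_of_nonneg hx, exp_neg, mul_inv, inv_inv, mul_comm,
      ← div_eq_mul_inv] at this
  have hw3 : w x ^ 3 ≤ 1 := pow_le_one₀ (w_pos x).le (w_le_one x)
  rw [Y]
  linarith

lemma abs_one_sub_five_mul_Q_pow_four_le (x : ℝ) : |1 - 5 * Q x ^ 4| ≤ 14 := by
  have h4 : w x ^ 4 ≤ 1 := pow_le_one₀ (w_pos x).le (w_le_one x)
  rw [Q_pow_four, abs_le]
  constructor <;> nlinarith [pow_pos (w_pos x) 4]

lemma eq_R_of_memY {R' : ℝ → ℝ} (hR' : MemY R') (heven : ∀ y, R' (-y) = R' y)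
    (hsol : ∀ y, -iteratedDeriv 2 R' y + R' y - 5 * Q y ^ 4 * R' y = 5 * Q y ^ 4) :
    R' = R := by
  have hR'2 : ContDiff ℝ 2 R' := hR'.1.of_le ENat.LEInfty.out
  have hR2 : ContDiff ℝ 2 R := contDiff_R.of_le ENat.LEInfty.out
  have hdiff : (fun x => R' x - R x) = 0 := by
    refine eq_zero_of_even_of_tendsto abs_one_sub_five_mul_Q_pow_four_le
      (d' := fun x => deriv R' x - deriv R x)
      (fun x => ((hR'2.differentiable (by norm_num) x).hasDerivAt).fun_sub
        ((hR2.differentiable (by norm_num) x).hasDerivAt))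
      (fun x => ((hasDerivAt_deriv_of_contDiff hR'2 x).fun_sub
        (hasDerivAt_deriv_of_contDiff hR2 x)).congr_deriv
          (by linear_combination (-1) * hsol x + R_solves x))
      hasDerivAt_Y hasDerivAt_deriv_Y (fun x => by simp only [heven, R_neg]) ?_ ?_ ?_
      tendsto_Y_atTop
    · norm_num [Y, w]
    · simp [T]
    · simpa using hR'.tendsto_atTop.sub memY_R.tendsto_atTop
  funext x
  exact sub_eq_zero.mp (congrFun hdiff x)

end GKdV

end

/-- Invertibility of the linearized operator in the direction `5Q⁴`: there exists
a unique even function `R ∈ 𝒴` with `LR = 5Q⁴`, and it satisfies `(Q,R) = −(3/4)∫Q`. -/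
theorem invertibility_R :
    ∃ R : ℝ → ℝ,
      (MemY R ∧ (∀ y, R (-y) = R y) ∧
        (∀ y, -iteratedDeriv 2 R y + R y - 5 * Q y ^ 4 * R y = 5 * Q y ^ 4)) ∧
      ((∫ y, Q y * R y) = -(3/4) * ∫ y, Q y) ∧
      (∀ R' : ℝ → ℝ, MemY R' → (∀ y, R' (-y) = R' y) →
        (∀ y, -iteratedDeriv 2 R' y + R' y - 5 * Q y ^ 4 * R' y = 5 * Q y ^ 4) →
        R' = R) :=
  ⟨GKdV.R, ⟨GKdV.memY_R, GKdV.R_neg, GKdV.R_solves⟩, GKdV.integral_Q_mul_R,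
    fun _ => GKdV.eq_R_of_memY⟩
end

section
/- Pointwise estimates on the localized profiles Q_b: there exist b* > 0 and constants C, C_k > 0 such that for all b with 0 < |b| < b* and all y ∈ ℝ: |Q_b(y)| ≤ C ( e^{−|y|} + |b| ( 1_{[−2,0]}(|b|^γ y) + e^{−|y|/2} ) ), and for every k ≥ 1, |Q_b^{(k)}(y)| ≤ C_k ( e^{−|y|} + |b| e^{−|y|/2} + |b|^{1+kγ} 1_{[−2,−1]}(|b|^γ y) ), where 1_A denotes the indicator function of the set A. -/
open MeasureTheory Real Set Filter

/-- The scaling generator applied to `Q`: `ΛQ(y) = Q(y)/2 + y Q'(y)`. -/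
noncomputable def lamQ (y : ℝ) : ℝ := Q y / 2 + y * deriv Q y

/-- The defining properties of the profile `P`. -/
def IsP (P : ℝ → ℝ) : Prop :=
  ContDiff ℝ (⊤ : ℕ∞) P ∧ (∃ M : ℝ, ∀ y, |P y| ≤ M) ∧ MemY (deriv P) ∧
  (∀ y, deriv (fun z => -iteratedDeriv 2 P z + P z - 5 * Q z ^ 4 * P z) y = lamQ y) ∧
  Tendsto P atBot (nhds ((1/2) * ∫ x, Q x)) ∧
  Tendsto P atTop (nhds 0)

/-- `γ = 3/4`. -/
noncomputable def γc : ℝ := 3/4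

/-!
Every derivative of `Q` is `Q` times a polynomial in `tanh (2y)`, hence `O(e^{-|y|})`. The
derivatives of `P` lie in `𝒴`, so they are `O(e^{-|y|/2})`; since `P → 0` at `+∞`, comparing
`P` with the primitive of this bound gives `|P(y)| = O(e^{-|y|/2})` for `y ≥ 0`.

For `a = |b|^γ ≤ 1`, the function `χ(a y) P(y)` vanishes for `a y < -2`, is bounded for
`a y ∈ [-2, 0]`, and for `a y > 0` we have `y > 0`, where `P` decays. By Leibniz' rule its
`k`-th derivative is a sum of terms `a^i χ^{(i)}(a y) P^{(k-i)}(y)`: those with `i < k` contain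
a derivative of `P`, and the one with `i = k` is supported where `a y ∈ [-2, -1]` and carries
the factor `|b| a^k = |b|^{1 + kγ}`.
-/

namespace Real

theorem hasDerivAt_tanh (x : ℝ) : HasDerivAt tanh (1 - tanh x ^ 2) x := by
  have h := (hasDerivAt_sinh x).div (hasDerivAt_cosh x) (cosh_pos x).ne'
  rw [show sinh / cosh = tanh from funext fun y => (tanh_eq_sinh_div_cosh y).symm] at h
  refine h.congr_deriv ?_
  rw [tanh_eq_sinh_div_cosh]
  field_simp

theorem inv_cosh_le_two_mul_exp_neg_abs (x : ℝ) : (cosh x)⁻¹ ≤ 2 * exp (-|x|) := by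
  have h : exp |x| ≤ 2 * cosh x := by
    rw [← cosh_abs, cosh_eq]
    linarith [exp_pos (-|x|)]
  rw [exp_neg, ← div_eq_mul_inv, inv_le_comm₀ (cosh_pos x) (by positivity), inv_div]
  linarith

end Real

open Real

theorem Q_le_mul_exp_neg_abs (x : ℝ) : Q x ≤ 12 ^ (1/4 : ℝ) * exp (-|x|) := by
  have hcosh : (cosh (2*x))⁻¹ ≤ 2 * exp (-(2*|x|)) := by
    simpa [abs_mul] using inv_cosh_le_two_mul_exp_neg_abs (2*x)
  have h : 3 * (cosh (2*x))⁻¹ ^ 2 ≤ 12 * exp (-|x|) ^ (4 : ℝ) := by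
    rw [← exp_mul]
    have : (2 * exp (-(2*|x|))) ^ 2 = 4 * exp (-|x| * 4) := by
      rw [mul_pow, ← exp_nat_mul]; ring_nf
    nlinarith [pow_le_pow_left₀ (by positivity) hcosh 2]
  calc Q x ≤ (12 * exp (-|x|) ^ (4 : ℝ)) ^ (1/4 : ℝ) := rpow_le_rpow (by positivity) h (by norm_num)
    _ = 12 ^ (1/4 : ℝ) * exp (-|x|) := by
      rw [mul_rpow (by norm_num) (by positivity), ← rpow_mul (exp_pos _).le]; norm_num

theorem Q_nonneg (x : ℝ) : 0 ≤ Q x := rpow_nonneg (by positivity) _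

theorem hasDerivAt_Q (x : ℝ) : HasDerivAt Q (-(tanh (2*x) * Q x)) x := by
  have hc := (cosh_pos (2*x)).ne'
  have hcosh : HasDerivAt (fun z => cosh (2*z)) (sinh (2*x) * 2) x :=
    (hasDerivAt_cosh (2*x)).comp x ((hasDerivAt_id x).const_mul 2 |>.congr_deriv (mul_one 2))
  have hpos : 0 < 3 * (cosh (2*x))⁻¹ ^ 2 := by positivity
  have h := ((((hcosh.inv hc).pow 2).const_mul 3).rpow_const (p := 1/4) (Or.inl hpos.ne'))
  refine h.congr_deriv ?_
  simp only [Pi.inv_apply, Pi.pow_apply]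
  rw [rpow_sub_one hpos.ne', tanh_eq_sinh_div_cosh, Q]
  norm_num
  field_simp
  ring

theorem contDiff_Q : ContDiff ℝ (⊤ : ℕ∞) Q := by
  have hu : ContDiff ℝ (⊤ : ℕ∞) (fun x : ℝ => 3 * (cosh (2*x))⁻¹ ^ 2) :=
    contDiff_const.mul (((contDiff_cosh.comp (contDiff_const.mul contDiff_id)).inv
      fun x => (cosh_pos _).ne').pow 2)
  exact contDiff_iff_contDiffAt.2 fun x =>
    (contDiffAt_rpow_const_of_ne (by positivity)).comp x hu.contDiffAt

open Polynomial in
theorem exists_iteratedDeriv_Q_eq_mul_eval_tanh (k : ℕ) :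
    ∃ p : ℝ[X], ∀ x, iteratedDeriv k Q x = Q x * p.eval (tanh (2*x)) := by
  induction k with
  | zero => exact ⟨1, by simp⟩
  | succ k ih =>
    obtain ⟨p, hp⟩ := ih
    refine ⟨-(X * p) + (C 2 - C 2 * X ^ 2) * derivative p, fun x => ?_⟩
    have htanh : HasDerivAt (fun z => tanh (2*z)) ((1 - tanh (2*x) ^ 2) * 2) x :=
      (hasDerivAt_tanh (2*x)).comp x ((hasDerivAt_id x).const_mul 2 |>.congr_deriv (mul_one 2))
    have h : HasDerivAt (fun z => Q z * p.eval (tanh (2*z))) _ x :=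
      (hasDerivAt_Q x).mul ((p.hasDerivAt _).comp x htanh)
    rw [iteratedDeriv_succ, funext hp, h.deriv]
    simp only [eval_add, eval_neg, eval_mul, eval_sub, eval_X, eval_C, eval_pow]
    ring

theorem exists_abs_iteratedDeriv_Q_le (k : ℕ) :
    ∃ C > 0, ∀ x, |iteratedDeriv k Q x| ≤ C * exp (-|x|) := by
  obtain ⟨p, hp⟩ := exists_iteratedDeriv_Q_eq_mul_eval_tanh k
  obtain ⟨M, hM⟩ := (isCompact_Icc (a := (-1 : ℝ)) (b := 1)).exists_bound_of_continuousOn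
    p.continuous.continuousOn
  have hM0 : 0 ≤ M := (norm_nonneg _).trans (hM 0 (by norm_num))
  refine ⟨12 ^ (1/4 : ℝ) * M + 1, by positivity, fun x => ?_⟩
  have hp_le : |p.eval (tanh (2*x))| ≤ M := hM _ (abs_le.1 (abs_tanh_lt_one _).le)
  rw [hp, abs_mul, abs_of_nonneg (Q_nonneg x)]
  calc Q x * |p.eval (tanh (2*x))| ≤ 12 ^ (1/4 : ℝ) * exp (-|x|) * M :=
        mul_le_mul (Q_le_mul_exp_neg_abs x) hp_le (abs_nonneg _) (by positivity)
    _ ≤ (12 ^ (1/4 : ℝ) * M + 1) * exp (-|x|) := by nlinarith [exp_pos (-|x|)]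

theorem exists_one_add_rpow_le_mul_exp_half (r : ℝ) :
    ∃ C > 0, ∀ x : ℝ, 0 ≤ x → (1 + x) ^ r ≤ C * exp (x / 2) := by
  set n : ℕ := ⌈r⌉₊ + 1
  have hn : (1 : ℝ) ≤ n := by simp [n]
  refine ⟨(2 * n) ^ n, by positivity, fun x hx => ?_⟩
  have hlin : 1 + x ≤ 2 * n * exp (x / (2 * n)) := by
    have := add_one_le_exp (x / (2 * n))
    calc 1 + x ≤ 2 * n * (x / (2 * n) + 1) := by field_simp; linarith
      _ ≤ 2 * n * exp (x / (2 * n)) := by gcongr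
  calc (1 + x) ^ r ≤ (1 + x) ^ (n : ℝ) :=
        rpow_le_rpow_of_exponent_le (by linarith) ((Nat.le_ceil r).trans (by simp [n]))
    _ = (1 + x) ^ n := rpow_natCast _ n
    _ ≤ (2 * n * exp (x / (2 * n))) ^ n := pow_le_pow_left₀ (by linarith) hlin n
    _ = (2 * n) ^ n * exp (x / 2) := by
        rw [mul_pow, ← exp_nat_mul]; congr 2; field_simp

theorem MemY.exists_abs_iteratedDeriv_le {φ : ℝ → ℝ} (hφ : MemY φ) (k : ℕ) :
    ∃ C > 0, ∀ y, |iteratedDeriv k φ y| ≤ C * exp (-|y| / 2) := by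
  obtain ⟨C, hC, r, -, hbound⟩ := hφ.2 k
  obtain ⟨C', hC', hpoly⟩ := exists_one_add_rpow_le_mul_exp_half r
  refine ⟨C * C', by positivity, fun y => ?_⟩
  calc |iteratedDeriv k φ y| ≤ C * (1 + |y|) ^ r * exp (-|y|) := hbound y
    _ ≤ C * (C' * exp (|y| / 2)) * exp (-|y|) := by
        gcongr; exact hpoly _ (abs_nonneg y)
    _ = C * C' * exp (|y| / 2 + -|y|) := by rw [exp_add]; ring
    _ = C * C' * exp (-|y| / 2) := by ring_nf

theorem abs_le_of_abs_deriv_le_of_tendsto_atTop {f : ℝ → ℝ} {C c : ℝ} (hc : 0 < c)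
    (hf : Differentiable ℝ f) (hf' : ∀ x, |deriv f x| ≤ C * exp (-c * x))
    (hlim : Tendsto f atTop (nhds 0)) (y : ℝ) : |f y| ≤ C / c * exp (-c * y) := by
  have key : ∀ g : ℝ → ℝ, Differentiable ℝ g → (∀ x, |deriv g x| ≤ C * exp (-c * x)) →
      Tendsto g atTop (nhds 0) → g y ≤ C / c * exp (-c * y) := by
    intro g hg hg' hglim
    set h : ℝ → ℝ := fun x => C / c * exp (-c * x) - g x
    have hderiv : ∀ x, HasDerivAt h (-(C * exp (-c * x)) - deriv g x) x := fun x => by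
      have := (((hasDerivAt_id x).const_mul (-c)).exp.const_mul (C / c)).sub (hg x).hasDerivAt
      refine this.congr_deriv ?_
      field_simp
      simp
    have hanti : Antitone h := antitone_of_deriv_nonpos (fun x => (hderiv x).differentiableAt)
      fun x => by rw [(hderiv x).deriv]; linarith [neg_abs_le (deriv g x), hg' x]
    have hhlim : Tendsto h atTop (nhds 0) := by
      show Tendsto (fun x => C / c * exp (-c * x) - g x) atTop (nhds 0)
      have hexp : Tendsto (fun x => exp (-c * x)) atTop (nhds 0) :=
        tendsto_exp_atBot.comp (tendsto_id.const_mul_atTop_of_neg (neg_neg_of_pos hc))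
      simpa using (hexp.const_mul (C / c)).sub hglim
    have := le_of_tendsto hhlim (eventually_atTop.2 ⟨y, fun z hz => hanti hz⟩)
    simp only [h] at this
    linarith
  refine abs_le.2 ⟨?_, key f hf hf' hlim⟩
  have := key (-f) hf.neg (fun x => by simpa [deriv.neg'] using hf' x)
    (by rw [← neg_zero]; exact hlim.neg)
  simp only [Pi.neg_apply] at this
  linarith

theorem IsP.exists_abs_le_of_nonneg {P : ℝ → ℝ} (hP : IsP P) :
    ∃ D > 0, ∀ y, 0 ≤ y → |P y| ≤ D * exp (-|y| / 2) := by
  obtain ⟨hsmooth, -, hderiv, -, -, hlim⟩ := hP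
  obtain ⟨D, hD, hbound⟩ := hderiv.exists_abs_iteratedDeriv_le 0
  refine ⟨2 * D, by positivity, fun y hy => ?_⟩
  have hdecay : ∀ x, |deriv P x| ≤ D * exp (-(1 / 2) * x) := fun x => by
    refine (hbound x).trans (mul_le_mul_of_nonneg_left (exp_le_exp.2 ?_) hD.le)
    linarith [le_abs_self x]
  have := abs_le_of_abs_deriv_le_of_tendsto_atTop (by norm_num) (hsmooth.differentiable (by simp))
    hdecay hlim y
  rw [abs_of_nonneg hy]
  exact this.trans_eq (by ring_nf)

theorem IsP.exists_abs_iteratedDeriv_le {P : ℝ → ℝ} (hP : IsP P) :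
    ∃ D : ℕ → ℝ, (∀ j, 0 < D j) ∧
      ∀ j, 1 ≤ j → ∀ y, |iteratedDeriv j P y| ≤ D j * exp (-|y| / 2) := by
  obtain ⟨-, -, hderiv, -⟩ := hP
  choose D hD₀ hD using hderiv.exists_abs_iteratedDeriv_le
  refine ⟨fun j => D (j - 1), fun j => hD₀ _, fun j hj y => ?_⟩
  obtain ⟨m, rfl⟩ := Nat.exists_eq_add_of_le' hj
  simpa [iteratedDeriv_succ'] using hD m y

structure IsCutoff (χ : ℝ → ℝ) : Prop where
  contDiff : ContDiff ℝ (⊤ : ℕ∞) χ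
  eq_zero : ∀ y ≤ (-2 : ℝ), χ y = 0
  eq_one : ∀ y ≥ (-1 : ℝ), χ y = 1

namespace IsCutoff

variable {χ : ℝ → ℝ}

theorem eventuallyEq_const (hχ : IsCutoff χ) {s : ℝ} (hs : s ∉ Icc (-2 : ℝ) (-1)) :
    ∃ c : ℝ, |c| ≤ 1 ∧ χ =ᶠ[nhds s] fun _ => c := by
  rcases not_and_or.1 hs with hs | hs
  · exact ⟨0, by simp, eventually_of_mem (Iio_mem_nhds (not_le.1 hs))
      fun z hz => hχ.eq_zero z (le_of_lt hz)⟩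
  · exact ⟨1, by simp, eventually_of_mem (Ioi_mem_nhds (not_le.1 hs))
      fun z hz => hχ.eq_one z (le_of_lt hz)⟩

theorem iteratedDeriv_eq_zero (hχ : IsCutoff χ) {j : ℕ} (hj : j ≠ 0) {s : ℝ}
    (hs : s ∉ Icc (-2 : ℝ) (-1)) : iteratedDeriv j χ s = 0 := by
  obtain ⟨c, -, hc⟩ := hχ.eventuallyEq_const hs
  rw [hc.iteratedDeriv_eq, iteratedDeriv_const, if_neg hj]

theorem exists_abs_iteratedDeriv_le (hχ : IsCutoff χ) (j : ℕ) :
    ∃ K > 0, ∀ s, |iteratedDeriv j χ s| ≤ K := by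
  obtain ⟨M, hM⟩ := (isCompact_Icc (a := (-2 : ℝ)) (b := -1)).exists_bound_of_continuousOn
    (hχ.contDiff.continuous_iteratedDeriv j (mod_cast le_top)).continuousOn
  have hM0 : 0 ≤ M := (norm_nonneg _).trans (hM (-2) (by norm_num))
  refine ⟨M + 1, by positivity, fun s => ?_⟩
  by_cases hs : s ∈ Icc (-2 : ℝ) (-1)
  · linarith [hM s hs, Real.norm_eq_abs (iteratedDeriv j χ s)]
  · obtain ⟨c, hc1, hc⟩ := hχ.eventuallyEq_const hs
    rw [hc.iteratedDeriv_eq, iteratedDeriv_const]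
    split_ifs
    · linarith
    · simp; linarith

end IsCutoff

theorem abs_add_mul_le {u v b A B e w : ℝ} (hu : |u| ≤ A * e) (hv : |v| ≤ B * w)
    (hA : 0 ≤ A) (hB : 0 ≤ B) (he : 0 ≤ e) (hw : 0 ≤ w) :
    |u + b * v| ≤ (A + B) * (e + |b| * w) := by
  have hbv : |b * v| ≤ B * (|b| * w) := by
    rw [abs_mul]; nlinarith [abs_nonneg b]
  calc |u + b * v| ≤ |u| + |b * v| := abs_add_le _ _
    _ ≤ A * e + B * (|b| * w) := add_le_add hu hbv
    _ ≤ (A + B) * (e + |b| * w) := by nlinarith [mul_nonneg (abs_nonneg b) hw]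

theorem abs_cutoff_mul_le {χ P : ℝ → ℝ} {K M D a : ℝ} (hχK : ∀ s, |χ s| ≤ K)
    (hχ : ∀ s ≤ (-2 : ℝ), χ s = 0) (hPM : ∀ y, |P y| ≤ M)
    (hPD : ∀ y, 0 ≤ y → |P y| ≤ D * exp (-|y| / 2)) (hD : 0 ≤ D) (ha : 0 ≤ a) (y : ℝ) :
    |χ (a * y) * P y| ≤
      K * (M + D) * ((Icc (-2 : ℝ) 0).indicator (fun _ => 1) (a * y) + exp (-|y| / 2)) := by
  have hK : 0 ≤ K := (abs_nonneg _).trans (hχK 0)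
  have hM : 0 ≤ M := (abs_nonneg _).trans (hPM 0)
  have hE := exp_pos (-|y| / 2)
  have hI : 0 ≤ (Icc (-2 : ℝ) 0).indicator (fun _ => (1 : ℝ)) (a * y) :=
    indicator_nonneg (fun _ _ => zero_le_one) _
  rw [abs_mul]
  rcases lt_or_ge (a * y) (-2) with hleft | hmid
  · rw [hχ _ hleft.le, abs_zero, zero_mul]; positivity
  rcases le_or_gt (a * y) 0 with hmid' | hright
  · rw [indicator_of_mem (mem_Icc.2 ⟨hmid, hmid'⟩)]
    have := mul_le_mul (hχK (a * y)) (hPM y) (abs_nonneg _) hK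
    nlinarith [mul_nonneg hK hD, mul_nonneg (mul_nonneg hK hM) hE.le]
  · have := mul_le_mul (hχK (a * y)) (hPD y (pos_of_mul_pos_right hright ha).le) (abs_nonneg _) hK
    nlinarith [mul_nonneg hK hM, mul_nonneg (mul_nonneg hK (add_nonneg hM hD)) hI]

theorem abs_iteratedDeriv_cutoff_mul_le {χ P : ℝ → ℝ} (hχ : ContDiff ℝ (⊤ : ℕ∞) χ)
    (hP : ContDiff ℝ (⊤ : ℕ∞) P) {K D : ℕ → ℝ} {M a : ℝ}
    (hχK : ∀ j s, |iteratedDeriv j χ s| ≤ K j)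
    (hχsupp : ∀ j, j ≠ 0 → ∀ s ∉ Icc (-2 : ℝ) (-1), iteratedDeriv j χ s = 0)
    (hPM : ∀ y, |P y| ≤ M) (hPD : ∀ j, 1 ≤ j → ∀ y, |iteratedDeriv j P y| ≤ D j * exp (-|y| / 2))
    (ha₀ : 0 ≤ a) (ha₁ : a ≤ 1) {k : ℕ} (hk : 1 ≤ k) (y : ℝ) :
    |iteratedDeriv k (fun z => χ (a * z) * P z) y| ≤
      (∑ i ∈ Finset.range k, k.choose i * K i * D (k - i)) * exp (-|y| / 2)
        + K k * M * (a ^ k * (Icc (-2 : ℝ) (-1)).indicator (fun _ => 1) (a * y)) := by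
  have hscale : ∀ i, iteratedDeriv i (fun z => χ (a * z)) =
      fun z => a ^ i * iteratedDeriv i χ (a * z) :=
    fun i => iteratedDeriv_comp_const_mul (hχ.of_le (mod_cast le_top)) a
  have hχa : ContDiff ℝ (⊤ : ℕ∞) (fun z => χ (a * z)) := hχ.comp (contDiff_const.mul contDiff_id)
  rw [iteratedDeriv_fun_mul (hχa.of_le (mod_cast le_top)).contDiffAt
      (hP.of_le (mod_cast le_top)).contDiffAt, Finset.sum_range_succ, Nat.choose_self, Nat.sub_self,
    iteratedDeriv_zero]
  simp only [hscale]
  refine (abs_add_le _ _).trans (add_le_add ?_ ?_)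
  · rw [Finset.sum_mul]
    refine (Finset.abs_sum_le_sum_abs _ _).trans (Finset.sum_le_sum fun i hi => ?_)
    have hik : 1 ≤ k - i := by have := Finset.mem_range.1 hi; omega
    have hai : a ^ i ≤ 1 := pow_le_one₀ ha₀ ha₁
    rw [abs_mul, abs_mul, abs_mul, Nat.abs_cast, abs_of_nonneg (pow_nonneg ha₀ i), mul_assoc]
    have hχi : a ^ i * |iteratedDeriv i χ (a * y)| ≤ K i :=
      (mul_le_of_le_one_left (abs_nonneg _) hai).trans (hχK i _)
    have hKi : 0 ≤ K i := (abs_nonneg _).trans (hχK i 0)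
    calc (k.choose i : ℝ) * (a ^ i * |iteratedDeriv i χ (a * y)| * |iteratedDeriv (k - i) P y|)
        ≤ k.choose i * (K i * (D (k - i) * exp (-|y| / 2))) := by
          gcongr
          exact hPD _ hik y
      _ = k.choose i * K i * D (k - i) * exp (-|y| / 2) := by ring
  · rw [Nat.cast_one, one_mul, abs_mul, abs_mul, abs_of_nonneg (pow_nonneg ha₀ k)]
    by_cases hs : a * y ∈ Icc (-2 : ℝ) (-1)
    · rw [indicator_of_mem hs, mul_one]
      have := mul_le_mul (hχK k (a * y)) (hPM y) (abs_nonneg _) ((abs_nonneg _).trans (hχK k 0))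
      nlinarith [pow_nonneg ha₀ k]
    · rw [hχsupp k (by omega) _ hs, indicator_of_notMem hs]
      simp

noncomputable def Qb (χ P : ℝ → ℝ) (b y : ℝ) : ℝ := Q y + b * (χ (|b| ^ γc * y) * P y)

theorem exists_abs_Qb_le {P χ : ℝ → ℝ} (hP : IsP P) (hχ : IsCutoff χ) :
    ∃ C > 0, ∀ b y, |Qb χ P b y| ≤ C * (exp (-|y|) +
      |b| * ((Icc (-2 : ℝ) 0).indicator (fun _ => 1) (|b| ^ γc * y) + exp (-|y| / 2))) := by
  obtain ⟨CQ, hCQ, hQ⟩ := exists_abs_iteratedDeriv_Q_le 0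
  obtain ⟨K, hK, hχK⟩ := hχ.exists_abs_iteratedDeriv_le 0
  obtain ⟨D, hD, hPD⟩ := hP.exists_abs_le_of_nonneg
  obtain ⟨-, ⟨M, hPM⟩, -⟩ := hP
  have hM : 0 ≤ M := (abs_nonneg _).trans (hPM 0)
  refine ⟨CQ + K * (M + D), by positivity, fun b y => ?_⟩
  refine abs_add_mul_le (by simpa using hQ y)
    (abs_cutoff_mul_le (by simpa using hχK) hχ.eq_zero hPM hPD hD.le (by positivity) y)
    hCQ.le (by positivity) (exp_pos _).le
    (add_nonneg (indicator_nonneg (fun _ _ => zero_le_one) _) (exp_pos _).le)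

theorem mul_rpow_pow {x γ : ℝ} (hx : 0 ≤ x) (hγ : 0 ≤ γ) (k : ℕ) :
    x * (x ^ γ) ^ k = x ^ (1 + k * γ) := by
  rw [← rpow_natCast, ← rpow_mul hx, rpow_add' hx (by positivity), rpow_one, mul_comm γ]

theorem iteratedDeriv_Qb {P χ : ℝ → ℝ} (hP : ContDiff ℝ (⊤ : ℕ∞) P)
    (hχ : ContDiff ℝ (⊤ : ℕ∞) χ) (k : ℕ) (b y : ℝ) :
    iteratedDeriv k (Qb χ P b) y =
      iteratedDeriv k Q y + b * iteratedDeriv k (fun z => χ (|b| ^ γc * z) * P z) y := by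
  have hχP : ContDiff ℝ (⊤ : ℕ∞) (fun z => b * (χ (|b| ^ γc * z) * P z)) :=
    contDiff_const.mul ((hχ.comp (contDiff_const.mul contDiff_id)).mul hP)
  rw [show Qb χ P b = fun z => Q z + b * (χ (|b| ^ γc * z) * P z) from rfl,
    iteratedDeriv_fun_add (contDiff_Q.of_le (mod_cast le_top)).contDiffAt
      (hχP.of_le (mod_cast le_top)).contDiffAt, iteratedDeriv_const_mul_field]

theorem exists_abs_iteratedDeriv_Qb_le {P χ : ℝ → ℝ} (hP : IsP P) (hχ : IsCutoff χ) :
    ∃ C : ℕ → ℝ, (∀ k, 0 < C k) ∧ ∀ k, 1 ≤ k → ∀ b, |b| ≤ 1 → ∀ y,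
      |iteratedDeriv k (Qb χ P b) y| ≤ C k * (exp (-|y|) + |b| * exp (-|y| / 2) +
        |b| ^ (1 + (k : ℝ) * γc) * (Icc (-2 : ℝ) (-1)).indicator (fun _ => 1) (|b| ^ γc * y)) := by
  choose CQ hCQ hQ using exists_abs_iteratedDeriv_Q_le
  choose K hK hχK using hχ.exists_abs_iteratedDeriv_le
  obtain ⟨D, hD, hPD⟩ := hP.exists_abs_iteratedDeriv_le
  obtain ⟨hPsmooth, ⟨M, hPM⟩, -⟩ := hP
  have hM : 0 ≤ M := (abs_nonneg _).trans (hPM 0)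
  set S : ℕ → ℝ := fun k => ∑ i ∈ Finset.range k, k.choose i * K i * D (k - i)
  have hS : ∀ k, 0 ≤ S k := fun k =>
    Finset.sum_nonneg fun i _ => by have := hK i; have := hD (k - i); positivity
  refine ⟨fun k => CQ k + (S k + K k * M),
    fun k => by have := hCQ k; have := hS k; have := hK k; positivity, fun k hk b hb y => ?_⟩
  set a := |b| ^ γc
  have hγ : (0 : ℝ) ≤ γc := by norm_num [γc]
  have ha₀ : 0 ≤ a := by positivity
  have ha₁ : a ≤ 1 := rpow_le_one (abs_nonneg b) hb hγ
  set I := (Icc (-2 : ℝ) (-1)).indicator (fun _ => (1 : ℝ)) (a * y)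
  have hI : 0 ≤ I := indicator_nonneg (fun _ _ => zero_le_one) _
  have hcut := abs_iteratedDeriv_cutoff_mul_le hχ.contDiff hPsmooth hχK
    (fun j hj s hs => hχ.iteratedDeriv_eq_zero hj hs) hPM hPD ha₀ ha₁ hk y
  have hv : |iteratedDeriv k (fun z => χ (a * z) * P z) y| ≤
      (S k + K k * M) * (exp (-|y| / 2) + a ^ k * I) :=
    hcut.trans <| by
      nlinarith [hS k, mul_nonneg (hK k).le hM, mul_nonneg (pow_nonneg ha₀ k) hI,
        exp_pos (-|y| / 2)]
  rw [iteratedDeriv_Qb hPsmooth hχ.contDiff]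
  refine (abs_add_mul_le (b := b) (hQ k y) hv (hCQ k).le
    (by have := hS k; have := hK k; positivity) (exp_pos _).le (by positivity)).trans_eq ?_
  rw [← mul_rpow_pow (abs_nonneg b) hγ]
  ring

theorem Qb_pointwise_estimates_general
    (P : ℝ → ℝ) (hP : IsP P)
    (χ : ℝ → ℝ) (hχ : ContDiff ℝ (⊤ : ℕ∞) χ)
    (hχleft : ∀ y ≤ (-2:ℝ), χ y = 0)
    (hχright : ∀ y ≥ (-1:ℝ), χ y = 1) :
    ∃ bstar > (0:ℝ), ∃ C > (0:ℝ), ∃ Ck : ℕ → ℝ, (∀ k, 0 < Ck k) ∧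
      ∀ b : ℝ, 0 < |b| → |b| < bstar →
        (∀ y : ℝ,
          |Q y + b * (χ (|b| ^ γc * y) * P y)| ≤
            C * (Real.exp (-|y|)
              + |b| * (Set.indicator (Icc (-2:ℝ) 0) (fun _ => (1:ℝ)) (|b| ^ γc * y)
                  + Real.exp (-|y| / 2)))) ∧
        (∀ k : ℕ, 1 ≤ k → ∀ y : ℝ,
          |iteratedDeriv k (fun z => Q z + b * (χ (|b| ^ γc * z) * P z)) y| ≤
            Ck k * (Real.exp (-|y|) + |b| * Real.exp (-|y| / 2)
              + |b| ^ (1 + (k:ℝ) * γc)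
                  * Set.indicator (Icc (-2:ℝ) (-1)) (fun _ => (1:ℝ)) (|b| ^ γc * y))) := by
  have hcutoff : IsCutoff χ := ⟨hχ, hχleft, hχright⟩
  obtain ⟨C, hC, hQb⟩ := exists_abs_Qb_le hP hcutoff
  obtain ⟨Ck, hCk, hQbk⟩ := exists_abs_iteratedDeriv_Qb_le hP hcutoff
  exact ⟨1, one_pos, C, hC, Ck, hCk, fun b _ hb => ⟨hQb b, fun k hk => hQbk k hk b hb.le⟩⟩

/-- Pointwise estimates on the localized profile `Q_b(y) = Q(y) + b χ(|b|^γ y) P(y)`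
and on its derivatives, for `|b|` small. -/
theorem Qb_pointwise_estimates
    (P : ℝ → ℝ) (hP : IsP P)
    (χ : ℝ → ℝ) (hχ : ContDiff ℝ (⊤ : ℕ∞) χ)
    (hχ01 : ∀ y, 0 ≤ χ y ∧ χ y ≤ 1)
    (hχleft : ∀ y ≤ (-2:ℝ), χ y = 0)
    (hχright : ∀ y ≥ (-1:ℝ), χ y = 1)
    (hχ'' : ∃ K > (0:ℝ), ∀ y, (iteratedDeriv 2 χ y) ^ 2 ≤ K * deriv χ y) :
    ∃ bstar > (0:ℝ), ∃ C > (0:ℝ), ∃ Ck : ℕ → ℝ, (∀ k, 0 < Ck k) ∧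
      ∀ b : ℝ, 0 < |b| → |b| < bstar →
        (∀ y : ℝ,
          |Q y + b * (χ (|b| ^ γc * y) * P y)| ≤
            C * (Real.exp (-|y|)
              + |b| * (Set.indicator (Icc (-2:ℝ) 0) (fun _ => (1:ℝ)) (|b| ^ γc * y)
                  + Real.exp (-|y| / 2)))) ∧
        (∀ k : ℕ, 1 ≤ k → ∀ y : ℝ,
          |iteratedDeriv k (fun z => Q z + b * (χ (|b| ^ γc * z) * P z)) y| ≤
            Ck k * (Real.exp (-|y|) + |b| * Real.exp (-|y| / 2)
              + |b| ^ (1 + (k:ℝ) * γc)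
                  * Set.indicator (Icc (-2:ℝ) (-1)) (fun _ => (1:ℝ)) (|b| ^ γc * y))) :=
  Qb_pointwise_estimates_general P hP χ hχ hχleft hχright
end
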